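/- arXiv:0808.2308 — 5 statements merged into one kernel-verified Lean document; each statement's English description precedes it below -/
import Mathlib

section
/- Let (ω_i) be a sequence of positive integers and define q_n by the recursion q_n = ω_n q_{n-1} + q_{n-2} with q_{-1} = 0, q_0 = 1. Then for all n ≥ 1, ω_1 · ∏_{i=2}^n ω_i (1 + 1/(ω_i(ω_{i-1}+1))) ≤ q_n. -/
/-!
Each factor of the product equals `ω_i + 1/(ω_{i-1} + 1)`, so it suffices to bound every ratio
`q_i / q_{i-1}` from below by it. Since `q` is monotone, `q_{i-1} ≤ (ω_{i-1} + 1) q_{i-2}`, whence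
`q_i = ω_i q_{i-1} + q_{i-2} ≥ q_{i-1} (ω_i + 1/(ω_{i-1} + 1))`.
-/

/-- Denominators of the convergents: `q_n = ω_n q_{n-1} + q_{n-2}`, `q_{-1} = 0`, `q_0 = 1`. -/
def qRec (a : ℕ → ℕ) : ℕ → ℕ
  | 0 => 1
  | 1 => a 1
  | n + 2 => a (n + 2) * qRec a (n + 1) + qRec a n

lemma mul_one_add_one_div_mul {K : Type*} [Field K] {x : K} (hx : x ≠ 0) (y : K) :
    x * (1 + 1 / (x * y)) = x + 1 / y := by
  rw [mul_add, mul_one, mul_one_div, div_mul_cancel_left₀ hx, one_div]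

namespace qRec

variable {a : ℕ → ℕ}

lemma monotone (ha : ∀ i, 1 ≤ a i) : Monotone (qRec a) := by
  refine monotone_nat_of_le_succ fun n => ?_
  cases n with
  | zero => exact ha 1
  | succ n => exact Nat.le_add_right_of_le (Nat.le_mul_of_pos_left _ (ha (n + 2)))

lemma succ_le_mul (ha : ∀ i, 1 ≤ a i) (m : ℕ) : qRec a (m + 1) ≤ (a (m + 1) + 1) * qRec a m := by
  cases m with
  | zero => simp [qRec]
  | succ m =>
    have hm : qRec a m ≤ qRec a (m + 1) := monotone ha m.le_succ
    show a (m + 2) * qRec a (m + 1) + qRec a m ≤ (a (m + 2) + 1) * qRec a (m + 1)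
    rw [add_one_mul]
    omega

lemma mul_add_one_div_le (ha : ∀ i, 1 ≤ a i) (m : ℕ) :
    (qRec a (m + 1) : ℝ) * (a (m + 2) + 1 / (a (m + 1) + 1)) ≤ qRec a (m + 2) := by
  have hq : (qRec a (m + 1) : ℝ) / (a (m + 1) + 1) ≤ qRec a m := by
    rw [div_le_iff₀ (by positivity), mul_comm]
    exact_mod_cast succ_le_mul ha m
  calc (qRec a (m + 1) : ℝ) * (a (m + 2) + 1 / (a (m + 1) + 1))
      = a (m + 2) * qRec a (m + 1) + qRec a (m + 1) / (a (m + 1) + 1) := by ring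
    _ ≤ a (m + 2) * qRec a (m + 1) + qRec a m := by gcongr
    _ = qRec a (m + 2) := by simp only [qRec]; push_cast; rfl

end qRec

/-- For a sequence `(ω_i)` of positive integers and all `n ≥ 1`,
`ω_1 ∏_{i=2}^n ω_i (1 + 1/(ω_i(ω_{i-1}+1))) ≤ q_n`. -/
theorem refined_lower_bound_qn (ω : ℕ → ℕ) (hω : ∀ i, 1 ≤ ω i) (n : ℕ) (hn : 1 ≤ n) :
    (ω 1 : ℝ) * ∏ i ∈ Finset.Icc 2 n,
        ((ω i : ℝ) * (1 + 1 / ((ω i : ℝ) * ((ω (i - 1) : ℝ) + 1))))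
      ≤ (qRec ω n : ℝ) := by
  obtain ⟨m, rfl⟩ := Nat.exists_eq_add_of_le' hn
  clear hn
  induction m with
  | zero => simp [qRec]
  | succ m ih =>
    have hω0 : (ω (m + 2) : ℝ) ≠ 0 := by exact_mod_cast (Nat.one_le_iff_ne_zero.mp (hω (m + 2)))
    rw [Finset.prod_Icc_succ_top (by omega), ← mul_assoc, Nat.add_sub_cancel,
      mul_one_add_one_div_mul hω0]
    calc _ ≤ (qRec ω (m + 1) : ℝ) * (ω (m + 2) + 1 / (ω (m + 1) + 1)) := by gcongr
      _ ≤ qRec ω (m + 2) := qRec.mul_add_one_div_le hω m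
end

section
/- If x is an irrational in (0,1) whose continued fraction digits a_i(x) tend to infinity, then lim_{n→∞} (log ∏_{i=1}^n a_i(x)) / (log q_n(x)) = 1. -/
open Filter

/-- The Gauss map `x ↦ 1/x - ⌊1/x⌋`. -/
noncomputable def gaussMap (x : ℝ) : ℝ := 1 / x - ⌊1 / x⌋

/-- The `i`-th continued fraction digit of `x` (for `i ≥ 1`). -/
noncomputable def cfDigit (x : ℝ) (i : ℕ) : ℕ := ⌊1 / (gaussMap^[i - 1] x)⌋₊

/-- The denominator `q_n(x)` of the `n`-th convergent of `x`. -/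
noncomputable def cfDenom (x : ℝ) : ℕ → ℕ := qRec (cfDigit x)

/-!
Since `a_n q_{n-1} ≤ q_n ≤ 2 a_n q_{n-1}`, we have
`log ∏ a_i ≤ log q_n ≤ log ∏ a_i + n log 2`. When `a_i → ∞`, the Cesàro means
`(1/n) log ∏ a_i` of `log a_i` tend to infinity, so the error `n log 2` is negligible.
-/

open Finset Topology

lemma Filter.Tendsto.cesaro_atTop {f : ℕ → ℝ} (hf : Tendsto f atTop atTop) :
    Tendsto (fun n : ℕ => (n⁻¹ : ℝ) * ∑ i ∈ range n, f i) atTop atTop := by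
  refine tendsto_atTop.2 fun M => ?_
  -- the truncation `min (f i) (M + 1)` converges to `M + 1`, hence so do its Cesàro means
  have htrunc : Tendsto (fun i => min (f i) (M + 1)) atTop (𝓝 (M + 1)) :=
    tendsto_const_nhds.congr' <|
      (hf.eventually_ge_atTop (M + 1)).mono fun i hi => (min_eq_right hi).symm
  filter_upwards [htrunc.cesaro.eventually (eventually_ge_nhds (lt_add_one M))] with n hn
  calc M ≤ (n⁻¹ : ℝ) * ∑ i ∈ range n, min (f i) (M + 1) := hn
    _ ≤ (n⁻¹ : ℝ) * ∑ i ∈ range n, f i := by gcongr; exact min_le_left _ _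

lemma tendsto_div_nhds_one_of_le_of_le_add_mul {L Q : ℕ → ℝ} {c : ℝ}
    (hL : Tendsto (fun n : ℕ => (n⁻¹ : ℝ) * L n) atTop atTop)
    (hlo : ∀ n, L n ≤ Q n) (hhi : ∀ n, Q n ≤ L n + c * n) :
    Tendsto (fun n => L n / Q n) atTop (𝓝 1) := by
  have hL_pos : ∀ᶠ n in atTop, 0 < L n :=
    (hL.eventually_gt_atTop 0).mono fun n hn => pos_of_mul_pos_right hn (by positivity)
  have herr : Tendsto (fun n : ℕ => 1 + c * (n / L n)) atTop (𝓝 1) := by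
    simpa [div_eq_inv_mul] using (hL.inv_tendsto_atTop.const_mul c).const_add 1
  have hQL : Tendsto (fun n => Q n / L n) atTop (𝓝 1) := by
    refine tendsto_of_tendsto_of_tendsto_of_le_of_le' tendsto_const_nhds herr ?_ ?_
    · filter_upwards [hL_pos] with n hn
      rw [one_le_div hn]
      exact hlo n
    · filter_upwards [hL_pos] with n hn
      rw [div_le_iff₀ hn, add_mul, one_mul, mul_assoc, div_mul_cancel₀ _ hn.ne']
      exact hhi n
  simpa using hQL.inv₀ one_ne_zero

section qRec

variable {a : ℕ → ℕ}

variable (a) in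
lemma mul_qRec_le_qRec_succ (n : ℕ) : a (n + 1) * qRec a n ≤ qRec a (n + 1) := by
  cases n with
  | zero => simp [qRec]
  | succ n => exact Nat.le_add_right _ _

lemma qRec_le_qRec_succ (ha : ∀ i, 1 ≤ a i) (n : ℕ) : qRec a n ≤ qRec a (n + 1) :=
  (Nat.le_mul_of_pos_left _ (ha _)).trans (mul_qRec_le_qRec_succ a n)

lemma qRec_succ_le (ha : ∀ i, 1 ≤ a i) (n : ℕ) :
    qRec a (n + 1) ≤ 2 * a (n + 1) * qRec a n := by
  cases n with
  | zero => change a 1 ≤ 2 * a 1 * 1; omega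
  | succ n =>
    have hmono := qRec_le_qRec_succ ha n
    have ha' := ha (n + 2)
    change a (n + 2) * qRec a (n + 1) + qRec a n ≤ 2 * a (n + 2) * qRec a (n + 1)
    nlinarith

variable (a) in
lemma prod_le_qRec (n : ℕ) : ∏ i ∈ Icc 1 n, a i ≤ qRec a n := by
  induction n with
  | zero => simp [qRec]
  | succ n ih =>
    rw [prod_Icc_succ_top (by omega), mul_comm]
    exact (Nat.mul_le_mul_left _ ih).trans (mul_qRec_le_qRec_succ a n)

lemma qRec_le_two_pow_mul_prod (ha : ∀ i, 1 ≤ a i) (n : ℕ) :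
    qRec a n ≤ 2 ^ n * ∏ i ∈ Icc 1 n, a i := by
  induction n with
  | zero => simp [qRec]
  | succ n ih =>
    calc qRec a (n + 1) ≤ 2 * a (n + 1) * qRec a n := qRec_succ_le ha n
      _ ≤ 2 * a (n + 1) * (2 ^ n * ∏ i ∈ Icc 1 n, a i) := by gcongr
      _ = 2 ^ (n + 1) * ∏ i ∈ Icc 1 (n + 1), a i := by
        rw [prod_Icc_succ_top (by omega)]; ring

lemma log_prod_le_log_qRec (ha : ∀ i, 1 ≤ a i) (n : ℕ) :
    Real.log (∏ i ∈ Icc 1 n, (a i : ℝ)) ≤ Real.log (qRec a n) := by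
  have hprod : (0 : ℝ) < ∏ i ∈ Icc 1 n, (a i : ℝ) :=
    prod_pos fun i _ => by exact_mod_cast ha i
  exact Real.log_le_log hprod (by exact_mod_cast prod_le_qRec a n)

lemma log_qRec_le_log_prod_add (ha : ∀ i, 1 ≤ a i) (n : ℕ) :
    Real.log (qRec a n) ≤ Real.log (∏ i ∈ Icc 1 n, (a i : ℝ)) + Real.log 2 * n := by
  have hprod : (0 : ℝ) < ∏ i ∈ Icc 1 n, (a i : ℝ) :=
    prod_pos fun i _ => by exact_mod_cast ha i
  have hq : (0 : ℝ) < qRec a n := hprod.trans_le (by exact_mod_cast prod_le_qRec a n)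
  calc Real.log (qRec a n) ≤ Real.log (2 ^ n * ∏ i ∈ Icc 1 n, (a i : ℝ)) :=
        Real.log_le_log hq (by exact_mod_cast qRec_le_two_pow_mul_prod ha n)
    _ = Real.log (∏ i ∈ Icc 1 n, (a i : ℝ)) + Real.log 2 * n := by
        rw [Real.log_mul (by positivity) hprod.ne', Real.log_pow]; ring

end qRec

lemma gaussMap_mapsTo :
    Set.MapsTo gaussMap {y | y ∈ Set.Ioo 0 1 ∧ Irrational y}
      {y | y ∈ Set.Ioo 0 1 ∧ Irrational y} := by
  rintro y ⟨-, hy⟩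
  have hinv : Irrational (1 / y) := by simpa only [one_div] using hy.inv
  have hfract : gaussMap y = Int.fract (1 / y) := rfl
  show gaussMap y ∈ Set.Ioo 0 1 ∧ Irrational (gaussMap y)
  rw [hfract]
  exact ⟨⟨Int.fract_pos.2 (hinv.ne_int _), Int.fract_lt_one _⟩, hinv.sub_intCast _⟩

lemma one_le_cfDigit {x : ℝ} (hx : x ∈ Set.Ioo (0 : ℝ) 1) (hirr : Irrational x) (i : ℕ) :
    1 ≤ cfDigit x i := by
  obtain ⟨⟨hpos, hlt⟩, -⟩ := gaussMap_mapsTo.iterate (i - 1) ⟨hx, hirr⟩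
  exact Nat.le_floor (by rw [Nat.cast_one, le_div_iff₀ hpos]; linarith)

/-- If the continued fraction digits of an irrational `x ∈ (0,1)` tend to infinity,
then the arithmetic-geometric scaling equals `1`. -/
theorem digits_to_infinity_scaling_one (x : ℝ) (hx : x ∈ Set.Ioo (0 : ℝ) 1)
    (hirr : Irrational x) (hdiv : Tendsto (fun i : ℕ => cfDigit x i) atTop atTop) :
    Tendsto (fun n : ℕ =>
        Real.log (∏ i ∈ Finset.Icc 1 n, (cfDigit x i : ℝ)) / Real.log (cfDenom x n))
      atTop (nhds 1) := by
  have ha := one_le_cfDigit hx hirr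
  have hlog : Tendsto (fun i => Real.log (cfDigit x (i + 1))) atTop atTop :=
    Real.tendsto_log_atTop.comp <|
      tendsto_natCast_atTop_atTop.comp ((tendsto_add_atTop_iff_nat 1).2 hdiv)
  refine tendsto_div_nhds_one_of_le_of_le_add_mul (hlog.cesaro_atTop.congr fun n => ?_)
    (log_prod_le_log_qRec ha) (log_qRec_le_log_prod_add ha)
  rw [Real.log_prod fun i _ => (Nat.cast_pos.2 (ha i)).ne', range_eq_Ico,
    sum_Ico_add' (fun i => Real.log (cfDigit x i)), Ico_add_one_right_eq_Icc, zero_add]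
end

section
/- For the Gauss measure λ_g with density 1/(log 2 · (1+x)) on (0,1), the integral ∫ 2 log a_1(x) dλ_g(x) equals (2/log 2) ∑_{k=1}^∞ log(k) · log(1 + 1/(k(k+2))) = 2 log K_0, where K_0 is the Khintchine constant. -/
open MeasureTheory

/-- The Gauss measure on `(0,1)`, with density `1/(log 2 · (1+x))` w.r.t. Lebesgue measure. -/
noncomputable def gaussMeasure : Measure ℝ :=
  (volume.restrict (Set.Ioo (0 : ℝ) 1)).withDensity
    fun x => ENNReal.ofReal (1 / (Real.log 2 * (1 + x)))

/-- The Khintchine constant `K₀ = ∏_{k≥1} (1 + 1/(k(k+2)))^(log k / log 2)`. -/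
noncomputable def khintchine : ℝ :=
  ∏' k : ℕ+, (1 + 1 / (((k : ℕ) : ℝ) * (((k : ℕ) : ℝ) + 2))) ^ (Real.log (k : ℕ) / Real.log 2)

/-! On `(1/(k+1), 1/k]` the first digit is constant, equal to `k`, and the Gauss measure of this
interval is `log ((1 + 1/k) / (1 + 1/(k+1))) / log 2 = log (1 + 1/(k(k+2))) / log 2`. Hence the
integral of the nonnegative function `2 log a₁` is the stated series, with no integrability to check
beforehand. The series converges since `log k · log (1 + 1/(k(k+2))) = O(k^(-3/2))`, so the product
`K₀` is the exponential of `1/log 2` times it. -/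

open Set Real

theorem integral_comp_eq_tsum_mul_measureReal_preimage {α β : Type*} [MeasurableSpace α]
    [MeasurableSpace β] [Countable β] [MeasurableSingletonClass β] {μ : Measure α}
    [IsFiniteMeasure μ] {g : α → β} (hg : Measurable g) {φ : β → ℝ} (hφ : ∀ b, 0 ≤ φ b) :
    ∫ x, φ (g x) ∂μ = ∑' b, φ b * μ.real (g ⁻¹' {b}) := by
  rw [← integral_map hg.aemeasurable (measurable_of_countable φ).aestronglyMeasurable,
    integral_eq_lintegral_of_nonneg_ae (ae_of_all _ hφ)
      (measurable_of_countable φ).aestronglyMeasurable,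
    lintegral_countable', ENNReal.tsum_toReal_eq fun b => by finiteness]
  congr 1 with b
  rw [ENNReal.toReal_mul, ENNReal.toReal_ofReal (hφ b),
    Measure.map_apply hg (measurableSet_singleton b), measureReal_def]

theorem natFloor_one_div_eq_iff {x : ℝ} {k : ℕ} (hk : k ≠ 0) :
    ⌊1 / x⌋₊ = k ↔ x ∈ Ioc ((k + 1 : ℝ)⁻¹) (k : ℝ)⁻¹ := by
  have hk0 : (0 : ℝ) < k := by positivity
  by_cases hx : 0 < x
  · rw [Nat.floor_eq_iff (by positivity), mem_Ioc, one_div, le_inv_comm₀ hk0 hx,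
      inv_lt_comm₀ hx (by positivity), and_comm]
  · rw [Nat.floor_of_nonpos (by rw [one_div]; exact inv_nonpos.mpr (not_lt.mp hx))]
    exact iff_of_false (Ne.symm hk) fun h => hx ((inv_pos.mpr (by positivity)).trans h.1)

theorem preimage_natFloor_one_div_singleton {k : ℕ} (hk : k ≠ 0) :
    (fun x : ℝ => ⌊1 / x⌋₊) ⁻¹' {k} = Ioc ((k + 1 : ℝ)⁻¹) (k : ℝ)⁻¹ :=
  Set.ext fun _ => natFloor_one_div_eq_iff hk

theorem gaussMeasure_eq_withDensity_Ioc :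
    gaussMeasure = (volume.restrict (Ioc (0 : ℝ) 1)).withDensity
      fun x => ENNReal.ofReal (1 / (log 2 * (1 + x))) := by
  rw [gaussMeasure, Measure.restrict_congr_set Ioo_ae_eq_Ioc]

theorem gaussMeasure_compl_Ioc : gaussMeasure (Ioc 0 1)ᶜ = 0 := by
  rw [gaussMeasure_eq_withDensity_Ioc, withDensity_apply _ measurableSet_Ioc.compl,
    Measure.restrict_restrict measurableSet_Ioc.compl, compl_inter_self, Measure.restrict_empty,
    lintegral_zero_measure]

theorem gaussMeasure_Ioc {a b : ℝ} (ha : 0 ≤ a) (hab : a ≤ b) (hb : b ≤ 1) :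
    gaussMeasure (Ioc a b) = ENNReal.ofReal (log ((1 + b) / (1 + a)) / log 2) := by
  have hdens : ∀ x ∈ Icc a b, 0 < log 2 * (1 + x) := fun x hx =>
    mul_pos (log_pos one_lt_two) (by linarith [hx.1])
  have hint : IntegrableOn (fun x => 1 / (log 2 * (1 + x))) (Ioc a b) := by
    refine (ContinuousOn.integrableOn_Icc ?_).mono_set Ioc_subset_Icc_self
    exact continuousOn_const.div (by fun_prop) fun x hx => (hdens x hx).ne'
  rw [gaussMeasure_eq_withDensity_Ioc, withDensity_apply _ measurableSet_Ioc,
    Measure.restrict_restrict measurableSet_Ioc, Ioc_inter_Ioc, max_eq_left ha, min_eq_left hb,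
    ← ofReal_integral_eq_lintegral_ofReal hint
      ((ae_restrict_iff' measurableSet_Ioc).mpr (ae_of_all _ fun x hx =>
        (one_div_pos.mpr (hdens x (Ioc_subset_Icc_self hx))).le)),
    ← intervalIntegral.integral_of_le hab]
  congr 1
  simp_rw [one_div, mul_inv]
  rw [intervalIntegral.integral_const_mul, intervalIntegral.integral_comp_add_left (fun x => x⁻¹),
    integral_inv_of_pos (by linarith) (by linarith)]
  ring

instance isProbabilityMeasure_gaussMeasure : IsProbabilityMeasure gaussMeasure where
  measure_univ := by
    rw [← measure_congr (ae_eq_univ.mpr gaussMeasure_compl_Ioc),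
      gaussMeasure_Ioc le_rfl zero_le_one le_rfl]
    norm_num [div_self (log_pos one_lt_two).ne']

theorem gaussMeasure_real_Ioc_inv_add_one_inv {k : ℕ} (hk : k ≠ 0) :
    gaussMeasure.real (Ioc ((k + 1 : ℝ)⁻¹) (k : ℝ)⁻¹) = log (1 + 1 / (k * (k + 2))) / log 2 := by
  have hk1 : (1 : ℝ) ≤ k := by exact_mod_cast Nat.one_le_iff_ne_zero.mpr hk
  have hinv : ((k + 1 : ℝ)⁻¹) ≤ (k : ℝ)⁻¹ := inv_anti₀ (by positivity) (by linarith)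
  rw [measureReal_def, gaussMeasure_Ioc (by positivity) hinv (inv_le_one_of_one_le₀ hk1),
    ENNReal.toReal_ofReal (div_nonneg (log_nonneg ?_) (log_nonneg one_le_two))]
  · congr 2
    field_simp
    ring
  · rw [le_div_iff₀ (by positivity)]
    linarith [inv_pos.mpr (show (0 : ℝ) < k by positivity)]

theorem summable_log_mul_log_one_add_one_div :
    Summable fun k : ℕ+ => log (k : ℕ) * log (1 + 1 / (((k : ℕ) : ℝ) * (((k : ℕ) : ℝ) + 2))) := by
  refine .of_nonneg_of_le (fun k => mul_nonneg (log_natCast_nonneg _) (log_nonneg ?_)) (fun k => ?_)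
    (((summable_nat_rpow_inv.mpr (by norm_num : (1 : ℝ) < 3 / 2)).mul_left 2).comp_injective
      PNat.coe_injective)
  · have : (0 : ℝ) ≤ 1 / (((k : ℕ) : ℝ) * (((k : ℕ) : ℝ) + 2)) := by positivity
    linarith
  set n : ℝ := ((k : ℕ) : ℝ)
  have hn : 0 < n := by positivity
  have hε : 0 < 1 / (n * (n + 2)) := by positivity
  have hlog_one_add : log (1 + 1 / (n * (n + 2))) ≤ 1 / (n * (n + 2)) := by
    linarith [log_le_sub_one_of_pos (by linarith : 0 < 1 + 1 / (n * (n + 2)))]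
  calc log n * log (1 + 1 / (n * (n + 2)))
      ≤ n ^ (1 / 2 : ℝ) / (1 / 2) * (1 / (n * (n + 2))) :=
        mul_le_mul (log_le_rpow_div hn.le one_half_pos) hlog_one_add (log_nonneg (by linarith))
          (by positivity)
    _ = 2 * n ^ (1 / 2 : ℝ) / (n * (n + 2)) := by ring
    _ ≤ 2 * n ^ (1 / 2 : ℝ) / n ^ (2 : ℝ) := by
        rw [rpow_two]
        gcongr
        nlinarith
    _ = 2 * (n ^ (3 / 2 : ℝ))⁻¹ := by
        rw [mul_div_assoc, ← rpow_sub hn, ← rpow_neg hn.le]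
        norm_num

theorem log_khintchine :
    log khintchine = (∑' k : ℕ+,
      log (k : ℕ) * log (1 + 1 / (((k : ℕ) : ℝ) * (((k : ℕ) : ℝ) + 2)))) / log 2 := by
  have hlog : ∀ k : ℕ+,
      log ((1 + 1 / (((k : ℕ) : ℝ) * (((k : ℕ) : ℝ) + 2))) ^ (log (k : ℕ) / log 2)) =
        log (k : ℕ) * log (1 + 1 / (((k : ℕ) : ℝ) * (((k : ℕ) : ℝ) + 2))) / log 2 := fun k => by
    rw [log_rpow (by positivity)]
    ring
  rw [khintchine, ← rexp_tsum_eq_tprod (fun k => by positivity)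
      (by simpa only [hlog] using summable_log_mul_log_one_add_one_div.div_const (log 2)),
    log_exp, tsum_congr hlog, tsum_div_const]

/-- The integral of `2 log a₁(x)` against the Gauss measure equals
`(2/log 2) ∑_{k≥1} log k · log(1 + 1/(k(k+2))) = 2 log K₀`. -/
theorem integral_log_first_digit_gauss :
    (∫ x, 2 * Real.log (⌊1 / x⌋₊ : ℝ) ∂gaussMeasure) =
        (2 / Real.log 2) *
          ∑' k : ℕ+, Real.log (k : ℕ) * Real.log (1 + 1 / (((k : ℕ) : ℝ) * (((k : ℕ) : ℝ) + 2))) ∧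
      (2 / Real.log 2) *
          (∑' k : ℕ+, Real.log (k : ℕ) * Real.log (1 + 1 / (((k : ℕ) : ℝ) * (((k : ℕ) : ℝ) + 2))))
        = 2 * Real.log khintchine := by
  refine ⟨?_, by rw [log_khintchine]; ring⟩
  rw [integral_comp_eq_tsum_mul_measureReal_preimage (by fun_prop) (φ := fun n : ℕ => 2 * log n)
      fun n => mul_nonneg zero_le_two (log_natCast_nonneg n),
    ← PNat.coe_injective.tsum_eq (f := fun n : ℕ => 2 * log n * gaussMeasure.real _)
      -- the `n = 0` term vanishes because `log 0 = 0`
      fun n hn => ⟨⟨n, Nat.pos_of_ne_zero fun h => hn (by simp [h])⟩, rfl⟩,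
    ← tsum_mul_left]
  congr 1 with k
  rw [preimage_natFloor_one_div_singleton k.ne_zero,
    gaussMeasure_real_Ioc_inv_add_one_inv k.ne_zero]
  ring
end

section
/- For the Gauss measure λ_g with density 1/(log 2 · (1+x)) on (0,1), one has ∫_0^1 2 log(x) / (log 2 · (1+x)) dx = −π²/(6 log 2), i.e. ∫_0^1 log(x)/(1+x) dx = −π²/12. -/
/-!
Expand `1 / (1 + x) = ∑ (-x)ⁿ` on `(0, 1)` and integrate termwise, using
`∫₀¹ xⁿ log x dx = -1 / (n + 1)²`; the swap is justified because the integrals of the absolute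
values sum to `ζ(2) < ∞`. This leaves the alternating series `∑ (-1)ⁿ / n² = -π² / 12`, which is
the Fourier series of the Bernoulli polynomial `B₂` at `1 / 2`.
-/

open MeasureTheory Real Set Filter Topology

-- The `n = 0` term is `1 / 0 = 0`.
theorem hasSum_neg_one_pow_div_sq :
    HasSum (fun n : ℕ => (-1 : ℝ) ^ n / (n : ℝ) ^ 2) (-π ^ 2 / 12) := by
  have h : HasSum (fun n : ℕ => 1 / (n : ℝ) ^ 2 * cos (2 * π * n * 2⁻¹))
      ((-1) ^ 2 * (2 * π) ^ 2 / 2 / (Nat.factorial 2) * bernoulliFun 2 2⁻¹) :=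
    hasSum_one_div_nat_pow_mul_cos one_ne_zero ⟨by norm_num, by norm_num⟩
  rw [bernoulliFun_eval_half, bernoulli_eq_bernoulli'_of_ne_one (by decide), bernoulli'_two] at h
  convert h using 1
  · ext n
    rw [show 2 * π * n * 2⁻¹ = n * π by ring, cos_nat_mul_pi]
    ring
  · norm_num [Nat.factorial]
    ring

theorem intervalIntegrable_pow_mul_log (n : ℕ) (a b : ℝ) :
    IntervalIntegrable (fun x => x ^ n * log x) volume a b :=
  intervalIntegral.intervalIntegrable_log'.continuousOn_mul (continuous_pow n).continuousOn

theorem hasDerivAt_primitive_pow_mul_log (n : ℕ) {x : ℝ} (hx : x ≠ 0) :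
    HasDerivAt (fun y => y ^ (n + 1) * log y / (n + 1) - y ^ (n + 1) / (n + 1) ^ 2)
      (x ^ n * log x) x := by
  have hpow : HasDerivAt (fun y : ℝ => y ^ (n + 1)) ((n + 1) * x ^ n) x := by
    simpa using hasDerivAt_pow (n + 1) x
  refine (((hpow.mul (hasDerivAt_log hx)).div_const ((n : ℝ) + 1)).sub
    (hpow.div_const (((n : ℝ) + 1) ^ 2))).congr_deriv ?_
  field_simp
  ring

theorem tendsto_pow_succ_mul_log_nhdsGT_zero (n : ℕ) :
    Tendsto (fun x : ℝ => x ^ (n + 1) * log x) (𝓝[>] 0) (𝓝 0) := by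
  refine (tendsto_log_mul_rpow_nhdsGT_zero (r := n + 1) (by positivity)).congr' ?_
  filter_upwards [self_mem_nhdsWithin] with x hx
  rw [mul_comm, ← rpow_natCast]
  push_cast
  rfl

theorem integral_pow_mul_log (n : ℕ) :
    ∫ x in (0 : ℝ)..1, x ^ n * log x = -1 / ((n : ℝ) + 1) ^ 2 := by
  set F := fun y : ℝ => y ^ (n + 1) * log y / (n + 1) - y ^ (n + 1) / (n + 1) ^ 2
  have hF0 : Tendsto F (𝓝[>] 0) (𝓝 0) := by
    have hpow : Tendsto (fun y : ℝ => y ^ (n + 1)) (𝓝[>] 0) (𝓝 0) :=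
      tendsto_nhdsWithin_of_tendsto_nhds (by simpa using (continuous_pow (n + 1)).tendsto (0 : ℝ))
    simpa using ((tendsto_pow_succ_mul_log_nhdsGT_zero n).div_const ((n : ℝ) + 1)).sub
      (hpow.div_const (((n : ℝ) + 1) ^ 2))
  have hF1 : Tendsto F (𝓝[<] 1) (𝓝 (F 1)) :=
    ((hasDerivAt_primitive_pow_mul_log n one_ne_zero).continuousAt.tendsto).mono_left
      nhdsWithin_le_nhds
  rw [intervalIntegral.integral_eq_sub_of_hasDerivAt_of_tendsto zero_lt_one
    (fun x hx => hasDerivAt_primitive_pow_mul_log n hx.1.ne')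
    (intervalIntegrable_pow_mul_log n 0 1) hF0 hF1]
  simp [F]
  ring

theorem setIntegral_Ioo_pow_mul_log (n : ℕ) :
    ∫ x in Ioo (0 : ℝ) 1, x ^ n * log x = -1 / ((n : ℝ) + 1) ^ 2 := by
  rw [← integral_Ioc_eq_integral_Ioo, ← intervalIntegral.integral_of_le zero_le_one,
    integral_pow_mul_log]

theorem hasSum_neg_one_pow_mul_pow_mul_log {x : ℝ} (hx : x ∈ Ioo (0 : ℝ) 1) :
    HasSum (fun n : ℕ => (-1) ^ n * (x ^ n * log x)) (log x / (1 + x)) := by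
  have hgeom := hasSum_geometric_of_abs_lt_one (r := -x)
    (by rw [abs_neg, abs_of_pos hx.1]; exact hx.2)
  have hterm : (fun n : ℕ => (-1) ^ n * (x ^ n * log x)) = fun n => (-x) ^ n * log x := by
    ext n
    rw [neg_pow x n, mul_assoc]
  rw [hterm, div_eq_inv_mul, ← sub_neg_eq_add]
  exact hgeom.mul_right (log x)

theorem integral_log_div_one_add :
    ∫ x in Ioo (0 : ℝ) 1, log x / (1 + x) = -π ^ 2 / 12 := by
  have hint (n : ℕ) : IntegrableOn (fun x => (-1) ^ n * (x ^ n * log x)) (Ioo (0 : ℝ) 1) :=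
    ((intervalIntegrable_iff_integrableOn_Ioo_of_le zero_le_one).mp
      (intervalIntegrable_pow_mul_log n 0 1)).const_mul _
  have hterm (n : ℕ) : ∫ x in Ioo (0 : ℝ) 1, (-1) ^ n * (x ^ n * log x) =
      (-1) ^ (n + 1) / ((n + 1 : ℕ) : ℝ) ^ 2 := by
    rw [integral_const_mul, setIntegral_Ioo_pow_mul_log]
    push_cast
    ring
  have hnorm (n : ℕ) :
      ∫ x in Ioo (0 : ℝ) 1, ‖(-1) ^ n * (x ^ n * log x)‖ = 1 / ((n : ℝ) + 1) ^ 2 := by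
    have hneg : ∀ x ∈ Ioo (0 : ℝ) 1, ‖(-1) ^ n * (x ^ n * log x)‖ = -(x ^ n * log x) :=
      fun x hx => by
        rw [norm_mul, norm_pow, norm_neg, norm_one, one_pow, one_mul,
          Real.norm_of_nonpos (mul_nonpos_of_nonneg_of_nonpos (pow_nonneg hx.1.le n)
            (log_nonpos hx.1.le hx.2.le))]
    rw [setIntegral_congr_fun measurableSet_Ioo hneg, integral_neg, setIntegral_Ioo_pow_mul_log]
    ring
  have hsummable : Summable fun n : ℕ => ∫ x in Ioo (0 : ℝ) 1, ‖(-1) ^ n * (x ^ n * log x)‖ := by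
    simp_rw [hnorm]
    exact_mod_cast (summable_nat_add_iff 1).mpr (Real.summable_one_div_nat_pow.mpr one_lt_two)
  have hsum := hasSum_integral_of_summable_integral_norm hint hsummable
  rw [setIntegral_congr_fun measurableSet_Ioo
    fun x hx => (hasSum_neg_one_pow_mul_pow_mul_log hx).tsum_eq] at hsum
  simp_rw [hterm] at hsum
  refine hsum.unique ?_
  simpa using (hasSum_nat_add_iff' 1).mpr hasSum_neg_one_pow_div_sq

/-- The Lyapunov integral of the Gauss map: `∫₀¹ 2 log x/(log 2 (1+x)) dx = −π²/(6 log 2)`,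
equivalently `∫₀¹ log x/(1+x) dx = −π²/12`. -/
theorem lyapunov_integral_gauss :
    (∫ x in Set.Ioo (0 : ℝ) 1, 2 * Real.log x / (Real.log 2 * (1 + x))) =
        -π ^ 2 / (6 * Real.log 2) ∧
      (∫ x in Set.Ioo (0 : ℝ) 1, Real.log x / (1 + x)) = -π ^ 2 / 12 := by
  refine ⟨?_, integral_log_div_one_add⟩
  have hfun : (fun x : ℝ => 2 * log x / (log 2 * (1 + x))) =
      fun x => 2 / log 2 * (log x / (1 + x)) :=
    funext fun x => (div_mul_div_comm _ _ _ _).symm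
  have hlog2 : log 2 ≠ 0 := (log_pos one_lt_two).ne'
  rw [hfun, integral_const_mul, integral_log_div_one_add]
  field_simp
  ring
end

section
/- For every 0 < ε < 1/2, setting N(ε) := (ε/3)^{−2/ε} and β(ε) := (3/log 2) · log(ε) · (ε/3)^{−4/ε}, one has ∑_{(k,l)∈ℕ²} (kl)^{−(1+ε)} (1 + 1/(k(l+1)))^{2β(ε)} < 1. -/
/-!
Write `u n = n ^ (-(1 + ε))`, so that the summand is `u k * u l` times a factor
`(1 + 1 / (k (l + 1))) ^ (2 β)` lying in `[0, 1]` because `β < 0`, and let `m = ⌈N⌉`.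
By the integral test `∑ u ≤ 1 + 1 / ε` and `∑_{n > m} u n ≤ N ^ (-ε) / ε = ε / 9`,
so the pairs with `k > m` or `l > m` contribute at most `2 (1 + 1 / ε) ε / 9`.
For `k, l ≤ m` we have `k (l + 1) ≤ 6 N² / 5`, and `2 ^ x ≤ 1 + x` on `[0, 1]` bounds the factor
by `2 ^ (5 / (6 N²) · 2 β) = ε ^ 5`, because `β / N² = 3 log ε / log 2`.
The total is at most `ε³ (1 + ε)² + 2 (1 + ε) / 9 < 1`.
-/

open Real Set

section Tail

variable {ε : ℝ}

lemma tsum_nat_add_rpow_neg_le (hε : 0 < ε) {m : ℕ} (hm : 0 < m) :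
    ∑' n : ℕ, ((n + m + 1 : ℕ) : ℝ) ^ (-(1 + ε)) ≤ (m : ℝ) ^ (-ε) / ε := by
  have hm' : (0 : ℝ) < m := Nat.cast_pos.2 hm
  have hexp : -(1 + ε) < -1 := by linarith
  calc ∑' n : ℕ, ((n + m + 1 : ℕ) : ℝ) ^ (-(1 + ε))
      ≤ ∫ x in Ioi (m : ℝ), x ^ (-(1 + ε)) :=
        AntitoneOn.tsum_comp_add_le_integral (f := fun x ↦ x ^ (-(1 + ε))) m
          (fun x hx _ _ hxy ↦ rpow_le_rpow_of_nonpos (hm'.trans_le hx) hxy (by linarith))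
          (integrableOn_Ioi_rpow_of_lt hexp hm')
          (fun x hx ↦ (rpow_pos_of_pos (hm'.trans hx) _).le)
    _ = (m : ℝ) ^ (-ε) / ε := by
        rw [integral_Ioi_rpow_of_lt hexp hm', show -(1 + ε) + 1 = -ε by ring, neg_div_neg_eq]

lemma summable_pnat_rpow_neg (hε : 0 < ε) :
    Summable fun n : ℕ+ ↦ ((n : ℕ) : ℝ) ^ (-(1 + ε)) :=
  (summable_nat_rpow.2 (by linarith)).comp_injective PNat.coe_injective

lemma tsum_pnat_rpow_neg_le (hε : 0 < ε) :
    ∑' n : ℕ+, ((n : ℕ) : ℝ) ^ (-(1 + ε)) ≤ 1 + 1 / ε := by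
  have hs : Summable fun n : ℕ ↦ ((n + 1 : ℕ) : ℝ) ^ (-(1 + ε)) :=
    (summable_nat_add_iff 1).2 (summable_nat_rpow.2 (by linarith))
  rw [tsum_pnat_eq_tsum_succ (f := fun n : ℕ ↦ (n : ℝ) ^ (-(1 + ε))), hs.tsum_eq_zero_add]
  simpa using tsum_nat_add_rpow_neg_le hε one_pos

lemma tsum_pnat_indicator_rpow_neg_le (hε : 0 < ε) {m : ℕ} (hm : 0 < m) :
    ∑' n : ℕ+, {n : ℕ+ | m < (n : ℕ)}.indicator (fun n : ℕ+ ↦ ((n : ℕ) : ℝ) ^ (-(1 + ε))) n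
      ≤ (m : ℝ) ^ (-ε) / ε := by
  rw [← (Nat.succPNat_injective.comp (add_left_injective m)).tsum_eq]
  · refine (tsum_congr fun n ↦ ?_).trans_le (tsum_nat_add_rpow_neg_le hε hm)
    rw [Function.comp_apply, indicator_of_mem (by simp)]
    rfl
  · intro n hn
    have hmn : m < (n : ℕ) := by
      by_contra h
      exact hn (indicator_of_notMem (s := {n : ℕ+ | m < (n : ℕ)}) h _)
    exact ⟨n - m - 1, PNat.eq (by simp; omega)⟩

end Tail

lemma tsum_mul_mul_le_of_le_on_compl {ι : Type*} {u : ι → ℝ} (hu : Summable u)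
    (hu0 : ∀ i, 0 ≤ u i) (T : Set ι) {a : ι × ι → ℝ} {c : ℝ} (ha0 : ∀ p, 0 ≤ a p)
    (ha1 : ∀ p, a p ≤ 1) (hc : 0 ≤ c)
    (hac : ∀ p : ι × ι, p.1 ∉ T → p.2 ∉ T → a p ≤ c) :
    ∑' p : ι × ι, u p.1 * u p.2 * a p ≤
      c * (∑' i, u i) ^ 2 + 2 * (∑' i, u i) * ∑' i, T.indicator u i := by
  set v := T.indicator u
  have hv : Summable v := hu.indicator T
  have hv0 : ∀ i, 0 ≤ v i := indicator_nonneg fun i _ ↦ hu0 i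
  have huu := hu.mul_of_nonneg hu hu0 hu0
  have hvu := hv.mul_of_nonneg hu hv0 hu0
  have huv := hu.mul_of_nonneg hv hu0 hv0
  have hdom : ∀ p : ι × ι,
      u p.1 * u p.2 * a p ≤ c * (u p.1 * u p.2) + v p.1 * u p.2 + u p.1 * v p.2 := by
    rintro ⟨i, j⟩
    have huu0 : 0 ≤ u i * u j := mul_nonneg (hu0 i) (hu0 j)
    have hvu0 : 0 ≤ v i * u j := mul_nonneg (hv0 i) (hu0 j)
    have huv0 : 0 ≤ u i * v j := mul_nonneg (hu0 i) (hv0 j)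
    have hcuu : 0 ≤ c * (u i * u j) := mul_nonneg hc huu0
    have hle : u i * u j * a (i, j) ≤ u i * u j := mul_le_of_le_one_right huu0 (ha1 _)
    by_cases hi : i ∈ T
    · rw [show v i = u i from indicator_of_mem hi u]
      linarith
    by_cases hj : j ∈ T
    · rw [show v j = u j from indicator_of_mem hj u]
      linarith
    nlinarith [hac (i, j) hi hj]
  have hsum : Summable fun p : ι × ι ↦ c * (u p.1 * u p.2) + v p.1 * u p.2 + u p.1 * v p.2 :=
    ((huu.mul_left c).add hvu).add huv
  calc ∑' p : ι × ι, u p.1 * u p.2 * a p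
      ≤ ∑' p : ι × ι, (c * (u p.1 * u p.2) + v p.1 * u p.2 + u p.1 * v p.2) :=
        Summable.tsum_le_tsum hdom
          (hsum.of_nonneg_of_le (fun p ↦ mul_nonneg (mul_nonneg (hu0 _) (hu0 _)) (ha0 p)) hdom)
          hsum
    _ = c * (∑' i, u i) ^ 2 + 2 * (∑' i, u i) * ∑' i, v i := by
        rw [((huu.mul_left c).add hvu).tsum_add huv, (huu.mul_left c).tsum_add hvu, tsum_mul_left,
          ← hu.tsum_mul_tsum hu huu, ← hv.tsum_mul_tsum hu hvu, ← hu.tsum_mul_tsum hv huv]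
        ring

lemma one_add_rpow_le_two_rpow_mul {a x t : ℝ} (ha : 0 ≤ a) (ha1 : a ≤ 1) (hax : a ≤ x)
    (ht : t ≤ 0) : (1 + x) ^ t ≤ 2 ^ (a * t) := by
  have hBernoulli : (2 : ℝ) ^ a ≤ 1 + a := by
    simpa [one_add_one_eq_two] using
      rpow_one_add_le_one_add_mul_self (s := 1) (by norm_num) ha ha1
  calc (1 + x) ^ t ≤ (1 + a) ^ t := rpow_le_rpow_of_nonpos (by linarith) (by linarith) ht
    _ ≤ (2 ^ a) ^ t := rpow_le_rpow_of_nonpos (by positivity) hBernoulli ht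
    _ = 2 ^ (a * t) := (rpow_mul zero_le_two a t).symm

section Constants

variable {ε : ℝ}

/-- `N(ε)` of the paper. -/
noncomputable def cutoff (ε : ℝ) : ℝ := (ε / 3) ^ (-2 / ε)

/-- `β(ε)` of the paper. -/
noncomputable def beta (ε : ℝ) : ℝ := 3 / log 2 * log ε * (ε / 3) ^ (-4 / ε)

lemma cutoff_pos (hε : 0 < ε) : 0 < cutoff ε := rpow_pos_of_pos (by positivity) _

lemma beta_eq (hε : 0 < ε) : beta ε = 3 / log 2 * log ε * cutoff ε ^ 2 := by
  rw [beta, cutoff, ← rpow_natCast, ← rpow_mul (by positivity)]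
  congr 2
  push_cast
  ring

lemma beta_nonpos (hε0 : 0 < ε) (hε1 : ε ≤ 1) : beta ε ≤ 0 :=
  mul_nonpos_of_nonpos_of_nonneg
    (mul_nonpos_of_nonneg_of_nonpos (by positivity) (log_nonpos hε0.le hε1)) (by positivity)

lemma cutoff_rpow_neg (hε : 0 < ε) : cutoff ε ^ (-ε) = (ε / 3) ^ 2 := by
  rw [cutoff, ← rpow_mul (by positivity), ← rpow_natCast]
  congr 1
  field_simp
  norm_num

lemma sixteen_le_cutoff (hε0 : 0 < ε) (hε : ε < 1 / 2) : 16 ≤ cutoff ε := by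
  have h : (ε / 3) ^ (-2 : ℝ) ≤ cutoff ε :=
    rpow_le_rpow_of_exponent_ge (by positivity) (by linarith)
      (by rw [div_le_iff₀ hε0]; linarith)
  rw [rpow_neg (by positivity), rpow_two] at h
  have : (ε / 3) ^ 2 ≤ 1 / 36 := by nlinarith
  calc (16 : ℝ) ≤ 1 / (1 / 36) := by norm_num
    _ ≤ ((ε / 3) ^ 2)⁻¹ := by rw [← one_div]; gcongr
    _ ≤ cutoff ε := h

lemma two_rpow_mul_two_beta (hε : 0 < ε) :
    (2 : ℝ) ^ (5 / (6 * cutoff ε ^ 2) * (2 * beta ε)) = ε ^ 5 := by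
  have hN : cutoff ε ≠ 0 := (cutoff_pos hε).ne'
  have hlog2 : 0 < log 2 := log_pos one_lt_two
  rw [beta_eq hε, rpow_def_of_pos two_pos,
    show log 2 * (5 / (6 * cutoff ε ^ 2) * (2 * (3 / log 2 * log ε * cutoff ε ^ 2))) =
      5 * log ε by field_simp; ring,
    ← exp_log (pow_pos hε 5), log_pow]
  norm_num

lemma tsum_pnat_indicator_gt_ceil_cutoff_le (hε0 : 0 < ε) (hε : ε < 1 / 2) :
    ∑' n : ℕ+, {n : ℕ+ | ⌈cutoff ε⌉₊ < (n : ℕ)}.indicator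
      (fun n : ℕ+ ↦ ((n : ℕ) : ℝ) ^ (-(1 + ε))) n ≤ ε / 9 := by
  have hN : 16 ≤ cutoff ε := sixteen_le_cutoff hε0 hε
  calc _ ≤ (⌈cutoff ε⌉₊ : ℝ) ^ (-ε) / ε :=
        tsum_pnat_indicator_rpow_neg_le hε0 (Nat.ceil_pos.2 (by linarith))
    _ ≤ cutoff ε ^ (-ε) / ε :=
        div_le_div_of_nonneg_right (rpow_le_rpow_of_nonpos (by linarith) (Nat.le_ceil _)
          (neg_nonpos.2 hε0.le)) hε0.le
    _ = ε / 9 := by rw [cutoff_rpow_neg hε0]; field_simp; ring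

lemma one_add_one_div_rpow_two_beta_le (hε0 : 0 < ε) (hε : ε < 1 / 2) {k l : ℕ} (hk0 : 0 < k)
    (hk : k ≤ ⌈cutoff ε⌉₊) (hl : l ≤ ⌈cutoff ε⌉₊) :
    (1 + 1 / ((k : ℝ) * ((l : ℝ) + 1))) ^ (2 * beta ε) ≤ ε ^ 5 := by
  set N := cutoff ε
  have hN : 16 ≤ N := sixteen_le_cutoff hε0 hε
  have hceil : (⌈N⌉₊ : ℝ) ≤ N + 1 := (Nat.ceil_lt_add_one (by linarith)).le
  have hk' : (k : ℝ) ≤ N + 1 := (Nat.cast_le.2 hk).trans hceil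
  have hl' : (l : ℝ) ≤ N + 1 := (Nat.cast_le.2 hl).trans hceil
  have hk1 : (1 : ℝ) ≤ k := Nat.one_le_cast.2 hk0
  have hx : 5 / (6 * N ^ 2) ≤ 1 / ((k : ℝ) * ((l : ℝ) + 1)) := by
    rw [div_le_div_iff₀ (by positivity) (by positivity)]
    nlinarith
  calc (1 + 1 / ((k : ℝ) * ((l : ℝ) + 1))) ^ (2 * beta ε)
      ≤ 2 ^ (5 / (6 * N ^ 2) * (2 * beta ε)) :=
        one_add_rpow_le_two_rpow_mul (by positivity) (by rw [div_le_one (by positivity)]; nlinarith)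
          hx (mul_nonpos_of_nonneg_of_nonpos zero_le_two (beta_nonpos hε0 (by linarith)))
    _ = ε ^ 5 := two_rpow_mul_two_beta hε0

end Constants

/-- For every `0 < ε < 1/2`, with `β(ε) := (3/log 2) · log ε · (ε/3)^{−4/ε}`, the double
series `∑_{(k,l)∈ℕ²} (kl)^{−(1+ε)} (1 + 1/(k(l+1)))^{2β(ε)}` is strictly less than `1`. -/
theorem key_double_sum_lt_one (ε : ℝ) (hε0 : 0 < ε) (hε : ε < 1 / 2) :
    (∑' p : ℕ+ × ℕ+,
        (((p.1 : ℕ) : ℝ) * ((p.2 : ℕ) : ℝ)) ^ (-(1 + ε)) *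
          (1 + 1 / (((p.1 : ℕ) : ℝ) * (((p.2 : ℕ) : ℝ) + 1))) ^
            (2 * (3 / Real.log 2 * Real.log ε * (ε / 3) ^ (-4 / ε)))) < 1 := by
  set u : ℕ+ → ℝ := fun n ↦ ((n : ℕ) : ℝ) ^ (-(1 + ε))
  set T : Set ℕ+ := {n | ⌈cutoff ε⌉₊ < (n : ℕ)}
  have hZ : ∑' n, u n ≤ 1 + 1 / ε := tsum_pnat_rpow_neg_le hε0
  have hT : ∑' n, T.indicator u n ≤ ε / 9 := tsum_pnat_indicator_gt_ceil_cutoff_le hε0 hε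
  have hT0 : 0 ≤ ∑' n, T.indicator u n :=
    tsum_nonneg fun n ↦ indicator_nonneg (fun n _ ↦ by positivity) n
  have hβ : 2 * beta ε ≤ 0 :=
    mul_nonpos_of_nonneg_of_nonpos zero_le_two (beta_nonpos hε0 (by linarith))
  calc _ = ∑' p : ℕ+ × ℕ+, u p.1 * u p.2 *
          (1 + 1 / (((p.1 : ℕ) : ℝ) * (((p.2 : ℕ) : ℝ) + 1))) ^ (2 * beta ε) :=
        tsum_congr fun p ↦ by rw [mul_rpow (Nat.cast_nonneg _) (Nat.cast_nonneg _)]; rfl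
    _ ≤ ε ^ 5 * (∑' n, u n) ^ 2 + 2 * (∑' n, u n) * ∑' n, T.indicator u n :=
        tsum_mul_mul_le_of_le_on_compl (summable_pnat_rpow_neg hε0) (fun n ↦ by positivity) T
          (fun p ↦ by positivity)
          (fun p ↦ rpow_le_one_of_one_le_of_nonpos (by simp; positivity) hβ) (by positivity)
          (fun p hk hl ↦
            one_add_one_div_rpow_two_beta_le hε0 hε p.1.pos (not_lt.1 hk) (not_lt.1 hl))
    _ ≤ ε ^ 5 * (1 + 1 / ε) ^ 2 + 2 * (1 + 1 / ε) * (ε / 9) := by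
        gcongr
    _ = ε ^ 3 * (1 + ε) ^ 2 + 2 * (1 + ε) / 9 := by field_simp; ring
    _ < 1 := by
        have h3 : ε ^ 3 < (1 / 2) ^ 3 := pow_lt_pow_left₀ hε hε0.le (by norm_num)
        have h2 : (1 + ε) ^ 2 < (3 / 2) ^ 2 :=
          pow_lt_pow_left₀ (by linarith) (by linarith) (by norm_num)
        nlinarith [mul_lt_mul'' h3 h2 (by positivity) (by positivity)]
end
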